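/- arXiv:2006.01808 — 10 statements merged into one kernel-verified Lean document; each statement's English description precedes it below -/
import Mathlib

section
/- Let v > 0 and integers a, b with 2 ≤ b ≤ a. Define x* = v·a·(b−1)/(b²·(a−1)) and u(x) = x^{a/(a−1)}·v / (x^{a/(a−1)} + (b−1)·(x*)^{a/(a−1)}) − x for x ≥ 0. Then x* is a global maximizer of u on ℝ_{≥0}. -/
/-!
Write `p = a/(a-1)` and `x = t·x*`. The factor `(x*)^p` cancels from `u`, leaving
`u(t·x*) = v·t^p/(t^p + b - 1) - x*·t`, and `u(t·x*) ≤ u(x*)` reduces to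
`b(t^p - 1) ≤ p(t - 1)(t^p + b - 1)`. Expanded, this is the weighted AM-GM inequality
`(p + b)·t^p ≤ p·t^(p+1) + p(b-1)·t + (b - p(b-1))`, whose weights are nonnegative
exactly because `p(b-1) ≤ b`, i.e. because `b ≤ a`.
-/

namespace Real

variable {p c t : ℝ}

theorem add_mul_rpow_le (hp : 0 < p) (hc : 1 ≤ c) (hpc : p * (c - 1) ≤ c) (ht : 0 < t) :
    (p + c) * t ^ p ≤ p * t ^ (p + 1) + p * (c - 1) * t + (c - p * (c - 1)) := by
  have hpc0 : 0 < p + c := by linarith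
  have hw₁ : 0 ≤ p / (p + c) := by positivity
  have hw₂ : 0 ≤ p * (c - 1) / (p + c) := div_nonneg (by nlinarith) hpc0.le
  have hw₃ : 0 ≤ (c - p * (c - 1)) / (p + c) := div_nonneg (by linarith) hpc0.le
  have hw : p / (p + c) + p * (c - 1) / (p + c) + (c - p * (c - 1)) / (p + c) = 1 := by
    field_simp; ring
  have amgm := geom_mean_le_arith_mean3_weighted hw₁ hw₂ hw₃ (rpow_nonneg ht.le (p + 1))
    ht.le zero_le_one hw
  have hgeom : (t ^ (p + 1)) ^ (p / (p + c)) * t ^ (p * (c - 1) / (p + c))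
      * 1 ^ ((c - p * (c - 1)) / (p + c)) = t ^ p := by
    rw [one_rpow, mul_one, ← rpow_mul ht.le, ← rpow_add ht]
    congr 1
    field_simp
    ring
  rw [hgeom] at amgm
  calc (p + c) * t ^ p
      ≤ (p + c) * (p / (p + c) * t ^ (p + 1) + p * (c - 1) / (p + c) * t
          + (c - p * (c - 1)) / (p + c) * 1) := mul_le_mul_of_nonneg_left amgm hpc0.le
    _ = p * t ^ (p + 1) + p * (c - 1) * t + (c - p * (c - 1)) := by field_simp

theorem mul_rpow_sub_one_le (hp : 0 < p) (hc : 1 ≤ c) (hpc : p * (c - 1) ≤ c) (ht : 0 ≤ t) :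
    c * (t ^ p - 1) ≤ p * (t - 1) * (t ^ p + c - 1) := by
  rcases ht.eq_or_lt with rfl | ht
  · rw [zero_rpow hp.ne']
    nlinarith
  · have hamgm := add_mul_rpow_le hp hc hpc ht
    rw [rpow_add ht, rpow_one] at hamgm
    nlinarith

/-- `s = v·p·(c-1)/c²` is the slope that makes `t = 1` a critical point. -/
theorem mul_rpow_div_sub_le {v s : ℝ} (hv : 0 ≤ v) (hp : 0 < p) (hc : 1 < c)
    (hpc : p * (c - 1) ≤ c) (hs : s = v * p * (c - 1) / c ^ 2) (ht : 0 ≤ t) :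
    v * t ^ p / (t ^ p + (c - 1)) - s * t ≤ v * 1 ^ p / (1 ^ p + (c - 1)) - s * 1 := by
  rw [one_rpow, add_sub_cancel, mul_one, mul_one]
  have hc0 : 0 < c := by linarith
  have hden : 0 < t ^ p + (c - 1) := by linarith [rpow_nonneg ht p]
  have hgain : v * t ^ p / (t ^ p + (c - 1)) - v / c
      = v * (c - 1) * (t ^ p - 1) / (c * (t ^ p + (c - 1))) := by
    field_simp; ring
  have hkey := mul_le_mul_of_nonneg_left (mul_rpow_sub_one_le hp hc.le hpc ht)
    (mul_nonneg hv (sub_nonneg.2 hc.le))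
  have hbound : v * (c - 1) * (t ^ p - 1) ≤ s * (t - 1) * (c * (t ^ p + (c - 1))) := by
    rw [hs, ← mul_le_mul_iff_of_pos_left hc0]
    field_simp
    linarith
  have := (div_le_iff₀ (by positivity)).2 hbound
  linarith

theorem rpow_mul_div_rpow_add_eq {v k s x : ℝ} (hs : 0 < s) (hx : 0 ≤ x) :
    x ^ p * v / (x ^ p + k * s ^ p) = v * (x / s) ^ p / ((x / s) ^ p + k) := by
  have hsp := rpow_pos_of_pos hs p
  rw [div_rpow hx hs.le]
  field_simp

end Real

theorem stmt_2 (v : ℝ) (hv : 0 < v) (a b : ℕ) (hb : 2 ≤ b) (hba : b ≤ a)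
    (xs : ℝ) (hxs : xs = v * a * ((b : ℝ) - 1) / ((b : ℝ) ^ 2 * ((a : ℝ) - 1)))
    (u : ℝ → ℝ)
    (hu : ∀ x : ℝ, u x =
      x ^ ((a : ℝ) / ((a : ℝ) - 1)) * v /
        (x ^ ((a : ℝ) / ((a : ℝ) - 1)) + ((b : ℝ) - 1) * xs ^ ((a : ℝ) / ((a : ℝ) - 1)))
      - x) :
    ∀ x : ℝ, 0 ≤ x → u x ≤ u xs := by
  have hbR : (2 : ℝ) ≤ b := by exact_mod_cast hb
  have hbaR : (b : ℝ) ≤ a := by exact_mod_cast hba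
  have ha1 : (0 : ℝ) < a - 1 := by linarith
  set p : ℝ := a / (a - 1) with hp
  have hp0 : 0 < p := div_pos (by linarith) ha1
  have hpb : p * (b - 1) ≤ b := by
    rw [hp, div_mul_eq_mul_div, div_le_iff₀ ha1]; nlinarith
  have hxs' : xs = v * p * (b - 1) / b ^ 2 := by rw [hxs, hp]; field_simp
  have hxs0 : 0 < xs := by rw [hxs']; exact div_pos (mul_pos (mul_pos hv hp0) (by linarith)) (by positivity)
  have hscale : ∀ x, 0 ≤ x →
      u x = v * (x / xs) ^ p / ((x / xs) ^ p + (b - 1)) - xs * (x / xs) := by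
    intro x hx
    rw [hu, Real.rpow_mul_div_rpow_add_eq hxs0 hx, mul_div_cancel₀ _ hxs0.ne']
  intro x hx
  rw [hscale x hx, hscale xs hxs0.le, div_self hxs0.ne']
  exact Real.mul_rpow_div_sub_le hv.le hp0 (by linarith) hpb hxs' (div_nonneg hx hxs0.le)
end

section
/- Let v > 0, integers 2 ≤ b ≤ a, x* = v·a·(b−1)/(b²·(a−1)), and u(x) = x^{a/(a−1)}·v/(x^{a/(a−1)} + (b−1)·(x*)^{a/(a−1)}) − x. Then u(x*) ≥ 0 = u(0). -/
/-!
At `x*` the denominator collapses to `b·x*^p`, so `u x* = v/b - x*`, and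
`x* = (v/b)·a(b-1)/(b(a-1)) ≤ v/b` because `a(b-1) ≤ b(a-1)` is just `b ≤ a`.
At `0` the exponent `p = a/(a-1)` is nonzero, so `0^p = 0`.
-/

lemma mul_sub_one_div_mul_sub_one_le_one {a b : ℝ} (hb : 1 < b) (hba : b ≤ a) :
    a * (b - 1) / (b * (a - 1)) ≤ 1 := by
  rw [div_le_one (by nlinarith)]
  nlinarith

lemma mul_div_add_mul_self {K : Type*} [Field K] {t : K} (ht : t ≠ 0) (v c : K) :
    t * v / (t + c * t) = v / (1 + c) := by
  rw [← one_add_mul, mul_comm t v, mul_div_mul_right _ _ ht]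

theorem stmt_3 (v : ℝ) (hv : 0 < v) (a b : ℕ) (hb : 2 ≤ b) (hba : b ≤ a)
    (xs : ℝ) (hxs : xs = v * a * ((b : ℝ) - 1) / ((b : ℝ) ^ 2 * ((a : ℝ) - 1)))
    (u : ℝ → ℝ)
    (hu : ∀ x : ℝ, u x =
      x ^ ((a : ℝ) / ((a : ℝ) - 1)) * v /
        (x ^ ((a : ℝ) / ((a : ℝ) - 1)) + ((b : ℝ) - 1) * xs ^ ((a : ℝ) / ((a : ℝ) - 1)))
      - x) :
    0 ≤ u xs ∧ u 0 = 0 := by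
  have hb1 : (1 : ℝ) < b := by exact_mod_cast hb
  have hba' : (b : ℝ) ≤ a := by exact_mod_cast hba
  have ha1 : (1 : ℝ) < a := hb1.trans_le hba'
  have hxs_eq : xs = v / b * (a * (b - 1) / (b * (a - 1))) := by
    have : (a : ℝ) - 1 ≠ 0 := by linarith
    rw [hxs]
    field_simp
  have hxs_pos : 0 < xs := by
    rw [hxs_eq]
    exact mul_pos (by positivity) (div_pos (by nlinarith) (by nlinarith))
  refine ⟨?_, ?_⟩
  · have hval : u xs = v / b - xs := by
      rw [hu, mul_div_add_mul_self (Real.rpow_pos_of_pos hxs_pos _).ne', add_sub_cancel]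
    rw [hval, hxs_eq, sub_nonneg]
    exact mul_le_of_le_one_right (by positivity) (mul_sub_one_div_mul_sub_one_le_one hb1 hba')
  · have hp : (a : ℝ) / (a - 1) ≠ 0 := div_ne_zero (by positivity) (by linarith)
    rw [hu, Real.zero_rpow hp]
    simp
end

section
/- Suppose n ≥ 3 and fix distinct contestants i, j, k with v_i = max_l v_l =: m. Let f be the CSF with: f_i(x) = 1 if x_i = m; f_j(x) = 1 if x_i ≠ m and x_j > 0; f_k(x) = 1 if x_i ≠ m and x_j = 0. Then the effort tuple x* with x*_i = m and x*_l = 0 for all l ≠ i is a Nash equilibrium, and it is the unique Nash equilibrium of the contest game; consequently in every Nash equilibrium the aggregate effort equals m. -/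
open Finset

noncomputable def payoff {N : Type*} (f : (N → ℝ) → N → ℝ) (v : N → ℝ)
    (x : N → ℝ) (i : N) : ℝ := f x i * v i - x i

/-- Pure-strategy Nash equilibrium of the contest game with strategy sets ℝ≥0. -/
def IsNash {N : Type*} [DecidableEq N] (f : (N → ℝ) → N → ℝ) (v : N → ℝ)
    (x : N → ℝ) : Prop :=
  (∀ i, 0 ≤ x i) ∧
  ∀ i : N, ∀ y : ℝ, 0 ≤ y →
    payoff f v (Function.update x i y) i ≤ payoff f v x i

/-- `f` is a contest success function: on nonnegative effort tuples it returns a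
probability vector over contestants. -/
def IsCSF {N : Type*} [Fintype N] (f : (N → ℝ) → N → ℝ) : Prop :=
  ∀ x : N → ℝ, (∀ i, 0 ≤ x i) →
    (∀ i, 0 ≤ f x i) ∧ ∑ i, f x i = 1

section

variable {N : Type*} {f : (N → ℝ) → N → ℝ} {v x : N → ℝ} {a b : N}

lemma update_nonneg [DecidableEq N] (hx : ∀ l, 0 ≤ x l) {y : ℝ} (hy : 0 ≤ y) (l : N) :
    0 ≤ Function.update x a y l := by
  rcases eq_or_ne l a with rfl | hl
  · simpa using hy
  · simpa [hl] using hx l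

lemma payoff_of_eq_zero (h : f x a = 0) : payoff f v x a = -x a := by
  simp [payoff, h]

lemma payoff_of_eq_one (h : f x a = 1) : payoff f v x a = v a - x a := by
  simp [payoff, h]

lemma IsCSF.eq_zero_of_eq_one [Fintype N] (hf : IsCSF f) (hx : ∀ l, 0 ≤ x l)
    (ha : f x a = 1) (hba : b ≠ a) : f x b = 0 := by
  classical
  obtain ⟨hnn, hsum⟩ := hf x hx
  have hrest : ∑ l ∈ univ.erase a, f x l = 0 := by
    linarith [add_sum_erase univ (f x) (mem_univ a)]
  exact (sum_eq_zero_iff_of_nonneg fun l _ => hnn l).mp hrest b (by simp [hba])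

lemma IsNash.eq_zero_of_eq_zero [Fintype N] [DecidableEq N] (hf : IsCSF f) (hx : IsNash f v x)
    (hva : 0 ≤ v a) (ha : f x a = 0) : x a = 0 := by
  have hdev := hx.2 a 0 le_rfl
  have hwin := (hf _ (update_nonneg hx.1 le_rfl (a := a))).1 a
  rw [payoff, payoff_of_eq_zero ha, Function.update_self] at hdev
  linarith [mul_nonneg hwin hva, hx.1 a]

end

section

variable {N : Type*} [Fintype N] [DecidableEq N] {v : N → ℝ} {m : ℝ} {i j k : N}
  {f : (N → ℝ) → N → ℝ}

lemma isNash_single (hm : 0 ≤ m) (hij : i ≠ j) (hik : i ≠ k) (hvi : v i = m) (hf : IsCSF f)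
    (hf1 : ∀ x : N → ℝ, (∀ l, 0 ≤ x l) → x i = m → f x i = 1)
    (hf3 : ∀ x : N → ℝ, (∀ l, 0 ≤ x l) → x i ≠ m → x j = 0 → f x k = 1) :
    IsNash f v fun l => if l = i then m else 0 := by
  set xs : N → ℝ := fun l => if l = i then m else 0
  have hxs : ∀ l, 0 ≤ xs l := fun l => by by_cases hl : l = i <;> simp [xs, hl, hm]
  have hwin := hf1 xs hxs (by simp [xs])
  have hpay : ∀ l, payoff f v xs l = 0 := fun l => by
    rcases eq_or_ne l i with rfl | hl
    · simp [payoff_of_eq_one hwin, hvi, xs]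
    · simp [payoff_of_eq_zero (hf.eq_zero_of_eq_one hxs hwin hl), xs, hl]
  refine ⟨hxs, fun l y hy => ?_⟩
  have hz := update_nonneg hxs hy (a := l)
  rw [hpay l]
  rcases eq_or_ne l i with rfl | hl
  · by_cases hym : y = m
    · rw [payoff_of_eq_one (hf1 _ hz (by simp [hym])), Function.update_self, hvi, hym, sub_self]
    · have hk := hf3 _ hz (by simpa using hym) (by simp [hij.symm, xs])
      simp [payoff_of_eq_zero (hf.eq_zero_of_eq_one hz hk hik), hy]
  · have hi := hf1 _ hz (by simp [hl.symm, xs])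
    simp [payoff_of_eq_zero (hf.eq_zero_of_eq_one hz hi hl), hy]

/-- If `i` misses `m`, then `j` either wins and can halve its effort, or loses at zero effort
and can win with effort `v j / 2`. -/
lemma IsNash.apply_eq_threshold (hv : ∀ l, 0 < v l) (hij : i ≠ j) (hjk : j ≠ k) (hf : IsCSF f)
    (hf2 : ∀ x : N → ℝ, (∀ l, 0 ≤ x l) → x i ≠ m → 0 < x j → f x j = 1)
    (hf3 : ∀ x : N → ℝ, (∀ l, 0 ≤ x l) → x i ≠ m → x j = 0 → f x k = 1)
    {x : N → ℝ} (hx : IsNash f v x) : x i = m := by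
  by_contra hxi
  have hwin_dev : ∀ y, 0 < y → f (Function.update x j y) j = 1 := fun y hy =>
    hf2 _ (update_nonneg hx.1 hy.le) (by simpa [hij] using hxi) (by simpa using hy)
  rcases (hx.1 j).lt_or_eq with hxj | hxj
  · have hdev := hx.2 j (x j / 2) (by positivity)
    rw [payoff_of_eq_one (hwin_dev _ (by positivity)), payoff_of_eq_one (hf2 x hx.1 hxi hxj),
      Function.update_self] at hdev
    linarith
  · have hlose := hf.eq_zero_of_eq_one hx.1 (hf3 x hx.1 hxi hxj.symm) hjk
    have hdev := hx.2 j (v j / 2) (half_pos (hv j)).le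
    rw [payoff_of_eq_one (hwin_dev _ (half_pos (hv j))), payoff_of_eq_zero hlose,
      Function.update_self] at hdev
    linarith [hv j]

lemma IsNash.eq_single (hv : ∀ l, 0 < v l) (hij : i ≠ j) (hjk : j ≠ k) (hf : IsCSF f)
    (hf1 : ∀ x : N → ℝ, (∀ l, 0 ≤ x l) → x i = m → f x i = 1)
    (hf2 : ∀ x : N → ℝ, (∀ l, 0 ≤ x l) → x i ≠ m → 0 < x j → f x j = 1)
    (hf3 : ∀ x : N → ℝ, (∀ l, 0 ≤ x l) → x i ≠ m → x j = 0 → f x k = 1)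
    {x : N → ℝ} (hx : IsNash f v x) : x = fun l => if l = i then m else 0 := by
  have hxi := hx.apply_eq_threshold hv hij hjk hf hf2 hf3
  have hwin := hf1 x hx.1 hxi
  funext l
  rcases eq_or_ne l i with rfl | hl
  · simp [hxi]
  · simp [hl, hx.eq_zero_of_eq_zero hf (hv l).le (hf.eq_zero_of_eq_one hx.1 hwin hl)]

end

theorem stmt_4_general {N : Type*} [Fintype N] [DecidableEq N]
    (v : N → ℝ) (hv : ∀ l, 0 < v l)
    (m : ℝ)
    (i j k : N) (hij : i ≠ j) (hik : i ≠ k) (hjk : j ≠ k)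
    (hvi : v i = m)
    (f : (N → ℝ) → N → ℝ) (hf : IsCSF f)
    (hf1 : ∀ x : N → ℝ, (∀ l, 0 ≤ x l) → x i = m → f x i = 1)
    (hf2 : ∀ x : N → ℝ, (∀ l, 0 ≤ x l) → x i ≠ m → 0 < x j → f x j = 1)
    (hf3 : ∀ x : N → ℝ, (∀ l, 0 ≤ x l) → x i ≠ m → x j = 0 → f x k = 1)
    (xs : N → ℝ) (hxs : xs = fun l => if l = i then m else 0) :
    IsNash f v xs ∧ (∀ x : N → ℝ, IsNash f v x → x = xs) ∧
      (∀ x : N → ℝ, IsNash f v x → ∑ l, x l = m) := by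
  subst hxs
  have huniq : ∀ x, IsNash f v x → x = _ := fun x hx => hx.eq_single hv hij hjk hf hf1 hf2 hf3
  refine ⟨isNash_single (hvi ▸ (hv i).le) hij hik hvi hf hf1 hf3, huniq, fun x hx => ?_⟩
  simp [huniq x hx]

theorem stmt_4 {N : Type*} [Fintype N] [DecidableEq N]
    (hcard : 3 ≤ Fintype.card N)
    (hne : (Finset.univ : Finset N).Nonempty)
    (v : N → ℝ) (hv : ∀ l, 0 < v l)
    (m : ℝ) (hm : m = Finset.univ.sup' hne v)
    (i j k : N) (hij : i ≠ j) (hik : i ≠ k) (hjk : j ≠ k)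
    (hvi : v i = m)
    (f : (N → ℝ) → N → ℝ) (hf : IsCSF f)
    (hf1 : ∀ x : N → ℝ, (∀ l, 0 ≤ x l) → x i = m → f x i = 1)
    (hf2 : ∀ x : N → ℝ, (∀ l, 0 ≤ x l) → x i ≠ m → 0 < x j → f x j = 1)
    (hf3 : ∀ x : N → ℝ, (∀ l, 0 ≤ x l) → x i ≠ m → x j = 0 → f x k = 1)
    (xs : N → ℝ) (hxs : xs = fun l => if l = i then m else 0) :
    IsNash f v xs ∧ (∀ x : N → ℝ, IsNash f v x → x = xs) ∧
      (∀ x : N → ℝ, IsNash f v x → ∑ l, x l = m) :=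
  stmt_4_general v hv m i j k hij hik hjk hvi f hf hf1 hf2 hf3 xs hxs
end

section
/- Suppose n = 2 and v_i > v_j. For every CSF f: if there exists a Nash equilibrium with aggregate effort equal to v_i, then the all-zero effort tuple is also a Nash equilibrium (which has aggregate effort 0 ≠ v_i). Hence no CSF is strictly extractive: no CSF has the property that some equilibrium achieves aggregate effort v_i and every equilibrium achieves aggregate effort v_i. -/
/-!
In any equilibrium each player can secure a nonnegative payoff by bidding zero, so
`x k ≤ f x k * v k`. If aggregate effort equals `v i`, summing gives
`v i ≤ f x i * v i + f x j * v j`, which together with `f x i + f x j = 1` and `v j < v i` forces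
`f x j = 0`, `x j = 0` and `x i = v i`: player `i` bids its full value alone and earns nothing.
Equilibrium then says no lone bid `y` of player `i` earns more than `y`; at `y = 0` this gives
`f 0 i = 0`, so the prize goes to `j` at zero effort, and both players are content at the zero
profile.
-/

open Finset

open Function

section

variable {N : Type*} [Fintype N] {f : (N → ℝ) → N → ℝ} {v x : N → ℝ}

lemma IsCSF.le_one (hf : IsCSF f) (hx : ∀ l, 0 ≤ x l) (k : N) : f x k ≤ 1 :=
  (hf x hx).2 ▸ single_le_sum (fun l _ => (hf x hx).1 l) (mem_univ k)

variable [DecidableEq N]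

lemma IsNash.le_mul (hf : IsCSF f) (hx : IsNash f v x) {k : N} (hvk : 0 ≤ v k) :
    x k ≤ f x k * v k := by
  have hnn : ∀ l, 0 ≤ update x k 0 l := forall_update_iff x (p := fun _ r => 0 ≤ r) |>.2
    ⟨le_rfl, fun l _ => hx.1 l⟩
  have hdev := hx.2 k 0 le_rfl
  have hsecure : 0 ≤ f (update x k 0) k * v k := mul_nonneg ((hf _ hnn).1 k) hvk
  simp only [payoff, update_self, sub_zero] at hdev
  linarith

section TwoPlayers

variable {i j : N} (hcard : Fintype.card N = 2) (hij : i ≠ j)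
include hcard hij

lemma univ_eq_pair_of_card_eq_two : (univ : Finset N) = {i, j} :=
  (eq_univ_of_card _ (by rw [card_pair hij, hcard])).symm

lemma eq_or_eq_of_card_eq_two (k : N) : k = i ∨ k = j := by
  simpa [univ_eq_pair_of_card_eq_two hcard hij] using mem_univ k

lemma sum_eq_add_of_card_eq_two (g : N → ℝ) : ∑ l, g l = g i + g j := by
  rw [univ_eq_pair_of_card_eq_two hcard hij, sum_pair hij]

lemma IsNash.eq_update_zero_of_sum_eq (hf : IsCSF f) (hvj : 0 ≤ v j) (hvij : v j < v i)
    (hx : IsNash f v x) (hsum : ∑ l, x l = v i) : x = update (0 : N → ℝ) i (v i) := by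
  rw [sum_eq_add_of_card_eq_two hcard hij] at hsum
  have hxi := hx.le_mul hf (hvj.trans hvij.le)
  have hxj := hx.le_mul hf hvj
  have hprob := (hf x hx.1).2
  rw [sum_eq_add_of_card_eq_two hcard hij] at hprob
  have hfj : f x j = 0 :=
    le_antisymm (by nlinarith [(hf x hx.1).1 i]) ((hf x hx.1).1 j)
  have hxj0 : x j = 0 := le_antisymm (by simpa [hfj] using hxj) (hx.1 j)
  funext k
  rcases eq_or_eq_of_card_eq_two hcard hij k with rfl | rfl
  · simp only [update_self]
    linarith
  · simp [update_of_ne hij.symm, hxj0]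

lemma IsNash.lone_bid_unprofitable (hf : IsCSF f) (hvj : 0 ≤ v j) (hvij : v j < v i)
    (hx : IsNash f v x) (hsum : ∑ l, x l = v i) {y : ℝ} (hy : 0 ≤ y) :
    f (update (0 : N → ℝ) i y) i * v i ≤ y := by
  have hdev := hx.2 i y hy
  have hfxi := hf.le_one hx.1 i
  rw [hx.eq_update_zero_of_sum_eq hcard hij hf hvj hvij hsum] at hdev hfxi
  simp only [payoff, update_idem, update_self] at hdev
  nlinarith [hvj.trans_lt hvij]

lemma isNash_zero_of_lone_bid_unprofitable (hf : IsCSF f) (hvj : 0 ≤ v j) (hvi : 0 < v i)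
    (hlone : ∀ y, 0 ≤ y → f (update (0 : N → ℝ) i y) i * v i ≤ y) : IsNash f v 0 := by
  have hprob := (hf 0 fun _ => le_rfl).2
  rw [sum_eq_add_of_card_eq_two hcard hij] at hprob
  have hfi : f (0 : N → ℝ) i = 0 := by
    have h := hlone 0 le_rfl
    rw [show update (0 : N → ℝ) i 0 = 0 from update_eq_self i (0 : N → ℝ)] at h
    exact le_antisymm (nonpos_of_mul_nonpos_left h hvi) ((hf 0 fun _ => le_rfl).1 i)
  refine ⟨fun _ => le_rfl, fun k y hy => ?_⟩
  have hnn : ∀ l, 0 ≤ update (0 : N → ℝ) k y l :=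
    forall_update_iff (0 : N → ℝ) (p := fun _ r => 0 ≤ r) |>.2 ⟨hy, fun _ _ => le_rfl⟩
  simp only [payoff, update_self, Pi.zero_apply, sub_zero]
  rcases eq_or_eq_of_card_eq_two hcard hij k with rfl | rfl
  · simpa [hfi] using hlone y hy
  · have := hf.le_one hnn k
    nlinarith

end TwoPlayers

end

theorem stmt_7 {N : Type*} [Fintype N] [DecidableEq N]
    (hcard : Fintype.card N = 2)
    (i j : N) (hij : i ≠ j)
    (v : N → ℝ) (hvj : 0 < v j) (hvij : v j < v i)
    (f : (N → ℝ) → N → ℝ) (hf : IsCSF f) :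
    ((∃ x : N → ℝ, IsNash f v x ∧ ∑ l, x l = v i) → IsNash f v (fun _ => 0)) ∧
      ¬ ((∃ x : N → ℝ, IsNash f v x ∧ ∑ l, x l = v i) ∧
          (∀ x : N → ℝ, IsNash f v x → ∑ l, x l = v i)) := by
  have hvi : 0 < v i := hvj.trans hvij
  have hzero : (∃ x : N → ℝ, IsNash f v x ∧ ∑ l, x l = v i) → IsNash f v (fun _ => 0) :=
    fun ⟨_, hx, hsum⟩ => isNash_zero_of_lone_bid_unprofitable hcard hij hf hvj.le hvi
      fun _ hy => hx.lone_bid_unprofitable hcard hij hf hvj.le hvij hsum hy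
  refine ⟨hzero, fun ⟨hex, hall⟩ => ?_⟩
  have hsum_zero := hall _ (hzero hex)
  rw [sum_const_zero] at hsum_zero
  exact hvi.ne hsum_zero
end

section
/- In the two-heterogeneous-value case (v_i > v_j), for any CSF f and any Nash equilibrium x* with x*_i + x*_j = v_i, it must hold that f_j(x*) = 0, x*_j = 0, x*_i = v_i, and f_i(x*) = 1. -/
open Finset

/-! Dropping out (effort `0`) secures a nonnegative payoff, so at an equilibrium each
contestant's effort is at most its expected prize, `x k ≤ f x k * v k`. Summing over the two
contestants, `v i = x i + x j ≤ f x i * v i + f x j * v j ≤ v i - f x j * (v i - v j)`, which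
forces `f x j = 0` because `v j < v i`; everything else follows. -/

theorem IsCSF.add_le_one {N : Type*} [Fintype N] {f : (N → ℝ) → N → ℝ} (hf : IsCSF f)
    {x : N → ℝ} (hx : ∀ k, 0 ≤ x k) {i j : N} (hij : i ≠ j) :
    f x i + f x j ≤ 1 := by
  classical
  obtain ⟨hnonneg, hsum⟩ := hf x hx
  calc f x i + f x j = ∑ k ∈ {i, j}, f x k := (sum_pair hij).symm
    _ ≤ ∑ k, f x k := sum_le_univ_sum_of_nonneg hnonneg
    _ = 1 := hsum

theorem IsNash.le_mul_prize {N : Type*} [Fintype N] [DecidableEq N]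
    {f : (N → ℝ) → N → ℝ} (hf : IsCSF f) {v x : N → ℝ} (hx : IsNash f v x)
    {k : N} (hvk : 0 ≤ v k) :
    x k ≤ f x k * v k := by
  have hdrop_nonneg : 0 ≤ Function.update x k 0 :=
    le_update_iff.2 ⟨le_rfl, fun l _ => hx.1 l⟩
  have hdrop := hx.2 k 0 le_rfl
  have hwin_nonneg := (hf _ hdrop_nonneg).1 k
  simp only [payoff, Function.update_self, sub_zero] at hdrop
  linarith [mul_nonneg hwin_nonneg hvk]

theorem stmt_8_general {N : Type*} [Fintype N] [DecidableEq N]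
    (i j : N) (hij : i ≠ j)
    (v : N → ℝ) (hvj : 0 < v j) (hvij : v j < v i)
    (f : (N → ℝ) → N → ℝ) (hf : IsCSF f)
    (x : N → ℝ) (hx : IsNash f v x) (hsum : x i + x j = v i) :
    f x j = 0 ∧ x j = 0 ∧ x i = v i ∧ f x i = 1 := by
  have hxi := hx.le_mul_prize hf (k := i) (by linarith)
  have hxj := hx.le_mul_prize hf (k := j) hvj.le
  have hone := hf.add_le_one hx.1 hij
  have hfj_nonneg := (hf x hx.1).1 j
  have hfi_le : f x i * v i ≤ (1 - f x j) * v i :=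
    mul_le_mul_of_nonneg_right (by linarith) (by linarith)
  have hfj : f x j = 0 := by
    have hloss : f x j * (v i - v j) ≤ 0 := by linarith
    exact le_antisymm (nonpos_of_mul_nonpos_left hloss (by linarith)) hfj_nonneg
  have hxj0 : x j = 0 := le_antisymm (by simpa [hfj] using hxj) (hx.1 j)
  have hfi_ge : 1 * v i ≤ f x i * v i := by linarith
  refine ⟨hfj, hxj0, by linarith, le_antisymm (by linarith) ?_⟩
  exact le_of_mul_le_mul_right hfi_ge (by linarith)

theorem stmt_8 {N : Type*} [Fintype N] [DecidableEq N]
    (hcard : Fintype.card N = 2)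
    (i j : N) (hij : i ≠ j)
    (v : N → ℝ) (hvj : 0 < v j) (hvij : v j < v i)
    (f : (N → ℝ) → N → ℝ) (hf : IsCSF f)
    (x : N → ℝ) (hx : IsNash f v x) (hsum : x i + x j = v i) :
    f x j = 0 ∧ x j = 0 ∧ x i = v i ∧ f x i = 1 :=
  stmt_8_general i j hij v hvj hvij f hf x hx hsum
end

section
/- If f is a fixed CSF and, for two value tuples v and w with unique maximizers at the same contestant i where v_i = 1 and w_i = 2, the equilibria x* ∈ E^{fv} and y* ∈ E^{fw} satisfy full extraction (∑ x* = 1, ∑ y* = 2), then x*_i = 1, y*_i = 2, all other components are 0, and f_i(x*) = f_i(y*) = 1; this yields a contradiction because deviating to effort 1 in the game with value tuple w gives contestant i payoff 1 > 0 = u_i^{fw}(y*). -/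
/-!
Deviating to zero effort guarantees a contestant `f x j * v j ≥ 0`, so in equilibrium
`x j ≤ f x j * v j`. Summing, full extraction `∑ x = v i` forces the expected prize
`∑ f x j * v j` up to its maximum `v i`, which, `i` being the unique maximizer, means `i` wins
with probability one and all others exert no effort: `x = Pi.single i (v i)`. Applied to both
games, `x = Pi.single i 1` and `y = Pi.single i 2`; in the game with values `w`, contestant `i`
then gains by lowering effort from `2` to `1`, which moves play to `x`, where `i` still wins.
-/

open Finset

section

variable {N : Type*} [Fintype N] {f : (N → ℝ) → N → ℝ} {v x : N → ℝ}

lemma IsNash.le_mul_value [DecidableEq N] (hf : IsCSF f) (hv : ∀ j, 0 ≤ v j)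
    (hx : IsNash f v x) (j : N) : x j ≤ f x j * v j := by
  have hdev_nonneg : ∀ l, 0 ≤ Function.update x j 0 l := by
    intro l
    rcases eq_or_ne l j with rfl | hl
    · simp
    · simpa [Function.update_of_ne hl] using hx.1 l
  have hdev : 0 ≤ payoff f v (Function.update x j 0) j := by
    simpa [payoff] using mul_nonneg ((hf _ hdev_nonneg).1 j) (hv j)
  have := hdev.trans (hx.2 j 0 le_rfl)
  simp only [payoff] at this
  linarith

lemma IsCSF.eq_zero_of_le_sum_mul (hf : IsCSF f) (hx : ∀ j, 0 ≤ x j) {i : N}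
    (hvmax : ∀ l, l ≠ i → v l < v i) (h : v i ≤ ∑ j, f x j * v j) :
    ∀ l, l ≠ i → f x l = 0 := by
  obtain ⟨hf_nonneg, hf_sum⟩ := hf x hx
  have hterm : ∀ j ∈ univ, f x j * v j ≤ f x j * v i := by
    intro j _
    rcases eq_or_ne j i with rfl | hj
    · exact le_rfl
    · exact mul_le_mul_of_nonneg_left (hvmax j hj).le (hf_nonneg j)
  have hmax : ∑ j, f x j * v i = v i := by rw [← sum_mul, hf_sum, one_mul]
  have heq := (sum_eq_sum_iff_of_le hterm).mp
    (le_antisymm (sum_le_sum hterm) (hmax.symm ▸ h))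
  intro l hl
  have : f x l * (v i - v l) = 0 := by linarith [heq l (mem_univ l)]
  exact (mul_eq_zero.mp this).resolve_right (sub_ne_zero.mpr (hvmax l hl).ne')

lemma IsNash.eq_single_of_sum_eq [DecidableEq N] (hf : IsCSF f) (hv : ∀ j, 0 ≤ v j)
    {i : N} (hvmax : ∀ l, l ≠ i → v l < v i) (hx : IsNash f v x)
    (hxsum : ∑ l, x l = v i) : x = (Pi.single i (v i) : N → ℝ) ∧ f x i = 1 := by
  have hle := hx.le_mul_value hf hv
  have hf_zero := hf.eq_zero_of_le_sum_mul hx.1 hvmax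
    (hxsum ▸ sum_le_sum fun j _ => hle j)
  have hx_zero : ∀ l, l ≠ i → x l = 0 := fun l hl =>
    le_antisymm (by simpa [hf_zero l hl] using hle l) (hx.1 l)
  have hxi : x i = v i := by rwa [Fintype.sum_eq_single i hx_zero] at hxsum
  refine ⟨funext fun l => ?_, ?_⟩
  · rcases eq_or_ne l i with rfl | hl
    · simp [hxi]
    · simp [hx_zero l hl, hl]
  · rw [← (hf x hx.1).2, Fintype.sum_eq_single i hf_zero]

end

theorem stmt_10_general {N : Type*} [Fintype N] [DecidableEq N]
    (f : (N → ℝ) → N → ℝ) (hf : IsCSF f)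
    (i : N)
    (v w : N → ℝ) (hv : ∀ l, 0 < v l) (hw : ∀ l, 0 < w l)
    (hvi : v i = 1) (hwi : w i = 2)
    (hvmax : ∀ l, l ≠ i → v l < v i) (hwmax : ∀ l, l ≠ i → w l < w i)
    (x y : N → ℝ) (hx : IsNash f v x) (hy : IsNash f w y)
    (hxsum : ∑ l, x l = 1) (hysum : ∑ l, y l = 2) :
    x i = 1 ∧ y i = 2 ∧ (∀ l, l ≠ i → x l = 0 ∧ y l = 0) ∧
      f x i = 1 ∧ f y i = 1 ∧
      payoff f w (Function.update y i 1) i = 1 ∧ False := by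
  obtain ⟨hx_eq, hfx⟩ := hx.eq_single_of_sum_eq hf (fun l => (hv l).le) hvmax (hvi ▸ hxsum)
  obtain ⟨hy_eq, hfy⟩ := hy.eq_single_of_sum_eq hf (fun l => (hw l).le) hwmax (hwi ▸ hysum)
  have hdev : Function.update y i 1 = x := by
    rw [hx_eq, hy_eq, hvi, Pi.single, Pi.single, Function.update_idem]
  have hpay_dev : payoff f w (Function.update y i 1) i = 1 := by
    rw [hdev, payoff, hfx, hwi, hx_eq]
    norm_num [hvi]
  have hpay_eq : payoff f w y i = 0 := by
    rw [payoff, hfy, hy_eq]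
    simp
  refine ⟨by simp [hx_eq, hvi], by simp [hy_eq, hwi], fun l hl => by simp [hx_eq, hy_eq, hl],
    hfx, hfy, hpay_dev, ?_⟩
  linarith [hy.2 i 1 zero_le_one]

theorem stmt_10 {N : Type*} [Fintype N] [DecidableEq N]
    (hcard : 2 ≤ Fintype.card N)
    (f : (N → ℝ) → N → ℝ) (hf : IsCSF f)
    (i : N)
    (v w : N → ℝ) (hv : ∀ l, 0 < v l) (hw : ∀ l, 0 < w l)
    (hvi : v i = 1) (hwi : w i = 2)
    (hvmax : ∀ l, l ≠ i → v l < v i) (hwmax : ∀ l, l ≠ i → w l < w i)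
    (x y : N → ℝ) (hx : IsNash f v x) (hy : IsNash f w y)
    (hxsum : ∑ l, x l = 1) (hysum : ∑ l, y l = 2) :
    x i = 1 ∧ y i = 2 ∧ (∀ l, l ≠ i → x l = 0 ∧ y l = 0) ∧
      f x i = 1 ∧ f y i = 1 ∧
      payoff f w (Function.update y i 1) i = 1 ∧ False :=
  stmt_10_general f hf i v w hv hw hvi hwi hvmax hwmax x y hx hy hxsum hysum
end

section
/- Let all n contestants have common value v > 0, and let a be an integer with 2 ≤ a ≤ n. Consider the CSF assigning winning probabilities proportional to x_i^{a/(a−1)} (with uniform probabilities 1/n if all efforts are zero). Then for any subset A ⊆ N with |A| = a, the effort tuple where each i ∈ A exerts v/a and all others exert 0 is a Nash equilibrium, and its aggregate effort equals v. -/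
open Finset

/-! The profile gives each of the `a` active contestants winning probability `1/a` at cost `v/a`,
so every payoff is zero. Against it, a contestant exerting `y` faces rivals whose powered efforts
sum to `m c^q` with `c = v/a`, `q = a/(a-1)` and `m ≥ a - 1`, and earns `v y^q/(y^q + m c^q) - y`.
This is nonpositive because Young's inequality for the conjugate exponents `a` and `q` gives
`a c y^(q-1) ≤ (a-1) c^q + y^q`. -/

lemma mul_mul_rpow_sub_one_le {p q c y : ℝ} (hpq : p.HolderConjugate q) (hc : 0 ≤ c)
    (hy : 0 ≤ y) : p * c * y ^ (q - 1) ≤ (p - 1) * c ^ q + y ^ q := by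
  have hpow : (y ^ (q - 1)) ^ p = y ^ q := by
    rw [← Real.rpow_mul hy, sub_mul, one_mul, mul_comm, hpq.mul_eq_add, add_sub_cancel_left]
  have young := Real.young_inequality_of_nonneg hc (Real.rpow_nonneg hy (q - 1)) hpq.symm
  rw [hpow] at young
  calc p * c * y ^ (q - 1) = p * (c * y ^ (q - 1)) := by ring
    _ ≤ p * (c ^ q / q + y ^ q / p) := by gcongr; exact hpq.pos.le
    _ = (p - 1) * c ^ q + y ^ q := by
      rw [mul_add, mul_div_cancel₀ _ hpq.ne_zero, ← hpq.div_conj_eq_sub_one]; ring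

lemma rpow_div_rpow_add_mul_sub_nonpos {p q c y m : ℝ} (hpq : p.HolderConjugate q)
    (hc : 0 < c) (hy : 0 ≤ y) (hm : p - 1 ≤ m) :
    y ^ q / (y ^ q + m * c ^ q) * (p * c) - y ≤ 0 := by
  have hm0 : 0 < m := hpq.sub_one_pos.trans_le hm
  have hden : 0 < y ^ q + m * c ^ q := by positivity
  have hsplit : y ^ q = y * y ^ (q - 1) := by
    rw [← Real.rpow_one_add' hy (by simpa using hpq.symm.ne_zero), add_sub_cancel]
  rw [sub_nonpos, div_mul_eq_mul_div, div_le_iff₀ hden]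
  calc y ^ q * (p * c) = y * (p * c * y ^ (q - 1)) := by rw [hsplit]; ring
    _ ≤ y * ((p - 1) * c ^ q + y ^ q) := by gcongr; exact mul_mul_rpow_sub_one_le hpq hc.le hy
    _ ≤ y * (y ^ q + m * c ^ q) := by rw [add_comm]; gcongr

section SymmetricProfile

variable {N : Type*} [Fintype N] [DecidableEq N] (A : Finset N)

lemma sum_rpow_update_ite {q : ℝ} (hq : q ≠ 0) (c : ℝ) (i : N) (y : ℝ) :
    ∑ l, Function.update (fun l => if l ∈ A then c else 0) i y l ^ q
      = y ^ q + #(A.erase i) * c ^ q := by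
  rw [← add_sum_erase _ _ (mem_univ i), Function.update_self]
  congr 1
  calc ∑ l ∈ univ.erase i, Function.update (fun l => if l ∈ A then c else 0) i y l ^ q
      = ∑ l ∈ univ.erase i, if l ∈ A then c ^ q else 0 := by
        refine sum_congr rfl fun l hl => ?_
        rw [Function.update_of_ne (ne_of_mem_erase hl)]
        split_ifs <;> simp [Real.zero_rpow hq]
    _ = #(A.erase i) * c ^ q := by
        rw [sum_ite_mem, sum_const, nsmul_eq_mul, erase_inter_comm, univ_inter]

def IsTullockCSF (f : (N → ℝ) → N → ℝ) (q p₀ : ℝ) : Prop :=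
  ∀ x : N → ℝ, (∀ l, 0 ≤ x l) → ∀ i : N,
    f x i = if ∃ j, 0 < x j then x i ^ q / ∑ j, x j ^ q else p₀

variable {f : (N → ℝ) → N → ℝ} {q p₀ v : ℝ}

lemma payoff_update_ite (hq : q ≠ 0) (hf : IsTullockCSF f q p₀)
    {c : ℝ} (hc : 0 < c) (hA : 1 < #A) {i : N} {y : ℝ} (hy : 0 ≤ y) :
    payoff f (fun _ => v) (Function.update (fun l => if l ∈ A then c else 0) i y) i
      = y ^ q / (y ^ q + #(A.erase i) * c ^ q) * v - y := by
  obtain ⟨j, hjA, hji⟩ := exists_mem_ne hA i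
  have hnonneg : ∀ l, 0 ≤ Function.update (fun l => if l ∈ A then c else 0) i y l := by
    intro l; rw [Function.update_apply]; split_ifs <;> positivity
  have hpos : ∃ l, 0 < Function.update (fun l => if l ∈ A then c else 0) i y l :=
    ⟨j, by rwa [Function.update_of_ne hji, if_pos hjA]⟩
  rw [payoff, hf _ hnonneg, if_pos hpos, sum_rpow_update_ite A hq, Function.update_self]

lemma payoff_ite_eq_zero (hq : q ≠ 0) (hf : IsTullockCSF f q p₀)
    (hv : 0 < v) (hA : 1 < #A) (i : N) :
    payoff f (fun _ => v) (fun l => if l ∈ A then v / #A else 0) i = 0 := by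
  have hc : 0 < v / #A := by positivity
  rw [← Function.update_eq_self i (fun l => if l ∈ A then v / #A else 0),
    payoff_update_ite A hq hf hc hA (by positivity)]
  by_cases hi : i ∈ A
  · rw [if_pos hi, card_erase_of_mem hi, Nat.cast_sub (by omega), Nat.cast_one, ← one_add_mul,
      add_sub_cancel, div_mul_cancel_right₀ (by positivity), inv_mul_eq_div, sub_self]
  · simp [hi, hq]

lemma payoff_update_ite_nonpos (hpq : (#A : ℝ).HolderConjugate q)
    (hf : IsTullockCSF f q p₀) (hv : 0 < v) (i : N) {y : ℝ} (hy : 0 ≤ y) :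
    payoff f (fun _ => v) (Function.update (fun l => if l ∈ A then v / #A else 0) i y) i ≤ 0 := by
  have hm : (#A : ℝ) - 1 ≤ #(A.erase i) := by
    rw [sub_le_iff_le_add]
    exact_mod_cast Nat.le_add_of_sub_le pred_card_le_card_erase
  have hdev := rpow_div_rpow_add_mul_sub_nonpos hpq (div_pos hv hpq.pos) hy hm
  rwa [mul_div_cancel₀ _ hpq.ne_zero, ← payoff_update_ite A hpq.symm.ne_zero hf
    (div_pos hv hpq.pos) (by exact_mod_cast hpq.lt) hy] at hdev

end SymmetricProfile

theorem stmt_11_general {N : Type*} [Fintype N] [DecidableEq N]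
    (n : ℕ)
    (v : ℝ) (hv : 0 < v)
    (a : ℕ) (ha2 : 2 ≤ a)
    (f : (N → ℝ) → N → ℝ)
    (hfdef : ∀ x : N → ℝ, (∀ l, 0 ≤ x l) → ∀ i : N,
      f x i = if ∃ j, 0 < x j
        then x i ^ ((a : ℝ) / ((a : ℝ) - 1)) / ∑ j, x j ^ ((a : ℝ) / ((a : ℝ) - 1))
        else 1 / (n : ℝ))
    (A : Finset N) (hA : A.card = a)
    (xs : N → ℝ) (hxs : xs = fun i => if i ∈ A then v / a else 0) :
    IsNash f (fun _ => v) xs ∧ ∑ i, xs i = v := by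
  subst hxs hA
  have hpq : (#A : ℝ).HolderConjugate (#A / (#A - 1)) := .conjExponent (by exact_mod_cast ha2)
  refine ⟨⟨fun i => by positivity, fun i y hy => ?_⟩, ?_⟩
  · rw [payoff_ite_eq_zero A hpq.symm.ne_zero hfdef hv (by omega)]
    exact payoff_update_ite_nonpos A hpq hfdef hv i hy
  · rw [sum_ite_mem, univ_inter, sum_const, nsmul_eq_mul]
    field_simp

theorem stmt_11 {N : Type*} [Fintype N] [DecidableEq N]
    (n : ℕ) (hn : Fintype.card N = n)
    (v : ℝ) (hv : 0 < v)
    (a : ℕ) (ha2 : 2 ≤ a) (han : a ≤ n)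
    (f : (N → ℝ) → N → ℝ)
    (hfdef : ∀ x : N → ℝ, (∀ l, 0 ≤ x l) → ∀ i : N,
      f x i = if ∃ j, 0 < x j
        then x i ^ ((a : ℝ) / ((a : ℝ) - 1)) / ∑ j, x j ^ ((a : ℝ) / ((a : ℝ) - 1))
        else 1 / (n : ℝ))
    (A : Finset N) (hA : A.card = a)
    (xs : N → ℝ) (hxs : xs = fun i => if i ∈ A then v / a else 0) :
    IsNash f (fun _ => v) xs ∧ ∑ i, xs i = v :=
  stmt_11_general n v hv a ha2 f hfdef A hA xs hxs
end

section
/- Let 3 ≤ a ≤ n and common value v > 0. Under the CSF with winning probabilities proportional to x_i^{a/(a−1)}, for any subset A ⊆ N with |A| = a − 1, the tuple where each i ∈ A exerts v·a·(a−2)/(a−1)³ and the rest exert 0 is a Nash equilibrium, whose aggregate effort v·a·(a−2)/(a−1)² is strictly less than v. Hence this CSF is not strictly extractive under v. -/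
open Finset

/-! Against rivals whose efforts, raised to the power `r = a/(a-1)`, sum to `S`, a contestant
exerting `y` earns `v y^r/(y^r + S) - y`. Writing `y = c w^(a-1)`, with `c = v a(a-2)/(a-1)^3`
the candidate equilibrium effort, turns `y^r` into `c^r w^a`, and `S` is `(a-2) c^r` for an
active contestant and `(a-1) c^r` for an idle one. The two no-deviation conditions then become
inequalities in `w`: for an idle contestant Bernoulli's `a w ≤ w^a + a - 1`, for an active one a
three-term weighted AM-GM. The aggregate effort `(a-1) c = v a(a-2)/(a-1)^2` is below `v` because
`a(a-2) < (a-1)^2`. -/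

open Real

lemma mul_le_rpow_add_sub_one {A w : ℝ} (hA : 1 ≤ A) (hw : 0 ≤ w) :
    A * w ≤ w ^ A + (A - 1) := by
  have := one_add_mul_self_le_rpow_one_add (s := w - 1) (by linarith) hA
  rw [add_sub_cancel] at this
  linarith

/-- Weighted AM-GM: with weights `A, 1, A (A - 2)` the geometric mean of
`w ^ (2 A - 1), 1, w ^ (A - 1)` is `w ^ A`. -/
lemma sq_sub_add_one_mul_rpow_le {A w : ℝ} (hA : 2 ≤ A) (hw : 0 ≤ w) :
    (A ^ 2 - A + 1) * w ^ A ≤ A * w ^ (2 * A - 1) + 1 + A * (A - 2) * w ^ (A - 1) := by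
  set T := A ^ 2 - A + 1
  have hT : 0 < T := by nlinarith
  have h := geom_mean_le_arith_mean3_weighted (w₁ := A / T) (w₂ := 1 / T) (w₃ := A * (A - 2) / T)
    (p₁ := w ^ (2 * A - 1)) (p₂ := 1) (p₃ := w ^ (A - 1)) (by positivity) (by positivity)
    (div_nonneg (by nlinarith) hT.le) (by positivity) zero_le_one (by positivity)
    (by rw [← add_div, ← add_div, div_eq_one_iff_eq hT.ne']; ring)
  have hexp : (2 * A - 1) * (A / T) + (A - 1) * (A * (A - 2) / T) = A := by
    rw [mul_div_assoc', mul_div_assoc', ← add_div, div_eq_iff hT.ne']; ring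
  rw [one_rpow, mul_one, ← rpow_mul hw, ← rpow_mul hw, ← rpow_add' hw (by linarith), hexp] at h
  have hmean : A / T * w ^ (2 * A - 1) + 1 / T * 1 + A * (A - 2) / T * w ^ (A - 1)
      = (A * w ^ (2 * A - 1) + 1 + A * (A - 2) * w ^ (A - 1)) / T := by ring
  rwa [hmean, le_div_iff₀ hT, mul_comm] at h

noncomputable def equilibriumEffort (v A : ℝ) : ℝ := v * A * (A - 2) / (A - 1) ^ 3

lemma equilibriumEffort_pos {v A : ℝ} (hv : 0 < v) (hA : 2 < A) : 0 < equilibriumEffort v A := by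
  have : 0 < A - 1 := by linarith
  have : 0 < A - 2 := by linarith
  unfold equilibriumEffort
  positivity

lemma rpow_div_rpow_add_sub_one_mul_sub_le_zero {A v w : ℝ} (hA : 3 ≤ A) (hv : 0 ≤ v)
    (hw : 0 ≤ w) :
    w ^ A / (w ^ A + (A - 1)) * v - equilibriumEffort v A * w ^ (A - 1) ≤ 0 := by
  have hA1 : 0 < A - 1 := by linarith
  have hA2 : 0 < A - 2 := by linarith
  have hden : 0 < w ^ A + (A - 1) := by have := rpow_nonneg hw A; linarith
  have hbern := mul_le_rpow_add_sub_one (A := A) (by linarith) hw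
  have hcube : (A - 1) ^ 3 ≤ A * (A * (A - 2)) := by nlinarith
  have hlin : v * w ≤ equilibriumEffort v A * (w ^ A + (A - 1)) := by
    rw [equilibriumEffort, div_mul_eq_mul_div, le_div_iff₀ (by positivity)]
    have := mul_le_mul_of_nonneg_left hbern (by positivity : 0 ≤ v * A * (A - 2))
    nlinarith [mul_le_mul_of_nonneg_left hcube (mul_nonneg hv hw)]
  rw [sub_nonpos, div_mul_eq_mul_div, div_le_iff₀ hden]
  calc w ^ A * v = w ^ (A - 1) * (v * w) := by
        have hA0 : A - 1 + 1 ≠ 0 := by rw [sub_add_cancel]; exact (by linarith : 0 < A).ne'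
        rw [mul_comm v w, ← mul_assoc, ← rpow_add_one' hw hA0, sub_add_cancel, mul_comm]
    _ ≤ w ^ (A - 1) * (equilibriumEffort v A * (w ^ A + (A - 1))) :=
      mul_le_mul_of_nonneg_left hlin (rpow_nonneg hw (A - 1))
    _ = _ := by ring

lemma rpow_div_rpow_add_sub_two_mul_sub_le {A v w : ℝ} (hA : 3 ≤ A) (hv : 0 ≤ v) (hw : 0 ≤ w) :
    w ^ A / (w ^ A + (A - 2)) * v - equilibriumEffort v A * w ^ (A - 1) ≤
      v / (A - 1) - equilibriumEffort v A := by
  have hA1 : 0 < A - 1 := by linarith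
  have hden : 0 < w ^ A + (A - 2) := by have := rpow_nonneg hw A; linarith
  have hprod : w ^ (A - 1) * w ^ A = w ^ (2 * A - 1) := by
    rw [← rpow_add' hw (by linarith)]; ring_nf
  have hgap : 0 ≤ v * (A - 2) / (A - 1) ^ 3 :=
    div_nonneg (mul_nonneg hv (by linarith)) (by positivity)
  have hslack : (v / (A - 1) - equilibriumEffort v A + equilibriumEffort v A * w ^ (A - 1))
        * (w ^ A + (A - 2)) - w ^ A * v
      = v * (A - 2) / (A - 1) ^ 3 *
        (A * w ^ (2 * A - 1) + 1 + A * (A - 2) * w ^ (A - 1) - (A ^ 2 - A + 1) * w ^ A) := by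
    rw [← hprod, equilibriumEffort]; field_simp [hA1.ne']; ring
  rw [sub_le_iff_le_add, div_mul_eq_mul_div, div_le_iff₀ hden]
  nlinarith [mul_nonneg hgap
    (sub_nonneg.mpr (sq_sub_add_one_mul_rpow_le (A := A) (by linarith) hw))]

noncomputable def tullockPayoff (r v S y : ℝ) : ℝ := y ^ r / (y ^ r + S) * v - y

lemma payoff_update_eq_tullockPayoff {N : Type*} [Fintype N] [DecidableEq N]
    {f : (N → ℝ) → N → ℝ} {r : ℝ}
    (hf : ∀ x : N → ℝ, (∀ l, 0 ≤ x l) → (∃ j, 0 < x j) → ∀ i, f x i = x i ^ r / ∑ j, x j ^ r)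
    (v : ℝ) {x : N → ℝ} (hx : ∀ l, 0 ≤ x l) {i : N} (hpos : ∃ j ≠ i, 0 < x j)
    {y : ℝ} (hy : 0 ≤ y) :
    payoff f (fun _ => v) (Function.update x i y) i =
      tullockPayoff r v (∑ j ∈ univ.erase i, x j ^ r) y := by
  have hx' : ∀ l, 0 ≤ Function.update x i y l := by
    intro l; rcases eq_or_ne l i with rfl | h
    · simpa using hy
    · simpa [h] using hx l
  obtain ⟨j, hji, hj⟩ := hpos
  have hsum : ∑ l, Function.update x i y l ^ r = y ^ r + ∑ l ∈ univ.erase i, x l ^ r := by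
    rw [← add_sum_erase _ _ (mem_univ i), Function.update_self]
    congr 1
    exact sum_congr rfl fun l hl => by rw [Function.update_of_ne (ne_of_mem_erase hl)]
  rw [payoff, hf _ hx' ⟨j, by rwa [Function.update_of_ne hji]⟩, hsum, Function.update_self,
    tullockPayoff]

lemma sum_erase_ite_rpow {N : Type*} [Fintype N] [DecidableEq N] (A : Finset N) (i : N)
    (c : ℝ) {r : ℝ} (hr : r ≠ 0) :
    ∑ j ∈ univ.erase i, (if j ∈ A then c else 0) ^ r = #(A.erase i) * c ^ r := by
  simp_rw [apply_ite (· ^ r), zero_rpow hr]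
  rw [sum_ite_mem, erase_inter, univ_inter, sum_const, nsmul_eq_mul]

lemma tullockPayoff_mul_rpow {A c : ℝ} (hA : 1 < A) (hc : 0 < c) (v k : ℝ) {w : ℝ}
    (hw : 0 ≤ w) :
    tullockPayoff (A / (A - 1)) v (k * c ^ (A / (A - 1))) (c * w ^ (A - 1)) =
      w ^ A / (w ^ A + k) * v - c * w ^ (A - 1) := by
  have hpow : (c * w ^ (A - 1)) ^ (A / (A - 1)) = c ^ (A / (A - 1)) * w ^ A := by
    rw [mul_rpow hc.le (rpow_nonneg hw _), ← rpow_mul hw, mul_div_cancel₀ _ (by linarith)]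
  rw [tullockPayoff, hpow, mul_comm k, ← mul_add, mul_div_mul_left _ _ (rpow_pos_of_pos hc _).ne']

lemma exists_eq_mul_rpow_sub_one {c y : ℝ} (A : ℝ) (hA : 1 < A) (hc : 0 < c) (hy : 0 ≤ y) :
    ∃ w, 0 ≤ w ∧ y = c * w ^ (A - 1) := by
  refine ⟨(y / c) ^ (A - 1)⁻¹, by positivity, ?_⟩
  rw [rpow_inv_rpow (div_nonneg hy hc.le) (by linarith), mul_div_cancel₀ _ hc.ne']

lemma tullockPayoff_le_tullockPayoff_zero {A v y : ℝ} (hA : 3 ≤ A) (hv : 0 < v) (hy : 0 ≤ y) :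
    tullockPayoff (A / (A - 1)) v ((A - 1) * equilibriumEffort v A ^ (A / (A - 1))) y ≤
      tullockPayoff (A / (A - 1)) v ((A - 1) * equilibriumEffort v A ^ (A / (A - 1))) 0 := by
  have hc := equilibriumEffort_pos hv (by linarith : 2 < A)
  obtain ⟨w, hw, rfl⟩ := exists_eq_mul_rpow_sub_one A (by linarith) hc hy
  have hr : A / (A - 1) ≠ 0 := (div_pos (by linarith) (by linarith)).ne'
  rw [tullockPayoff_mul_rpow (by linarith) hc _ _ hw, tullockPayoff, zero_rpow hr]
  simpa using rpow_div_rpow_add_sub_one_mul_sub_le_zero hA hv.le hw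

lemma tullockPayoff_le_tullockPayoff_equilibriumEffort {A v y : ℝ} (hA : 3 ≤ A) (hv : 0 < v)
    (hy : 0 ≤ y) :
    tullockPayoff (A / (A - 1)) v ((A - 2) * equilibriumEffort v A ^ (A / (A - 1))) y ≤
      tullockPayoff (A / (A - 1)) v ((A - 2) * equilibriumEffort v A ^ (A / (A - 1)))
        (equilibriumEffort v A) := by
  have hc := equilibriumEffort_pos hv (by linarith : 2 < A)
  obtain ⟨w, hw, rfl⟩ := exists_eq_mul_rpow_sub_one A (by linarith) hc hy
  have hself := tullockPayoff_mul_rpow (A := A) (by linarith) hc v (A - 2) zero_le_one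
  rw [one_rpow, one_rpow, mul_one, one_div_mul_eq_div, show 1 + (A - 2) = A - 1 by ring] at hself
  rw [tullockPayoff_mul_rpow (by linarith) hc _ _ hw, hself]
  exact rpow_div_rpow_add_sub_two_mul_sub_le hA hv.le hw

lemma isNash_ite_equilibriumEffort {N : Type*} [Fintype N] [DecidableEq N]
    {f : (N → ℝ) → N → ℝ} {v : ℝ} (hv : 0 < v) {a : ℕ} (ha3 : 3 ≤ a)
    (hf : ∀ x : N → ℝ, (∀ l, 0 ≤ x l) → (∃ j, 0 < x j) → ∀ i,
      f x i = x i ^ ((a : ℝ) / ((a : ℝ) - 1)) / ∑ j, x j ^ ((a : ℝ) / ((a : ℝ) - 1)))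
    {A : Finset N} (hA : #A = a - 1) :
    IsNash f (fun _ => v) fun i => if i ∈ A then equilibriumEffort v a else 0 := by
  have ha : (3 : ℝ) ≤ a := by exact_mod_cast ha3
  have hcardA : (#A : ℝ) = a - 1 := by rw [hA, Nat.cast_pred (by omega)]
  have hc := equilibriumEffort_pos hv (by linarith : (2 : ℝ) < a)
  have hr : (a : ℝ) / ((a : ℝ) - 1) ≠ 0 := (div_pos (by linarith) (by linarith)).ne'
  have hxs0 : ∀ l, 0 ≤ (if l ∈ A then equilibriumEffort v a else 0) := fun l => by
    split_ifs <;> first | exact hc.le | exact le_rfl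
  refine ⟨hxs0, fun i y hy => ?_⟩
  have hpos : ∃ j ≠ i, 0 < if j ∈ A then equilibriumEffort v a else 0 := by
    obtain ⟨j, hjA, hji⟩ := exists_mem_ne (by omega : 1 < #A) i
    exact ⟨j, hji, by simpa [hjA] using hc⟩
  have hbase := payoff_update_eq_tullockPayoff hf v hxs0 hpos (hxs0 i)
  rw [Function.update_eq_self] at hbase
  rw [payoff_update_eq_tullockPayoff hf v hxs0 hpos hy, hbase, sum_erase_ite_rpow A i _ hr]
  by_cases hi : i ∈ A
  · rw [card_erase_of_mem hi, Nat.cast_pred (by omega), hcardA, sub_sub, one_add_one_eq_two,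
      if_pos hi]
    exact tullockPayoff_le_tullockPayoff_equilibriumEffort ha hv hy
  · rw [erase_eq_of_notMem hi, hcardA, if_neg hi]
    exact tullockPayoff_le_tullockPayoff_zero ha hv hy

theorem stmt_15_general {N : Type*} [Fintype N] [DecidableEq N]
    (n : ℕ)
    (v : ℝ) (hv : 0 < v)
    (a : ℕ) (ha3 : 3 ≤ a)
    (f : (N → ℝ) → N → ℝ)
    (hfdef : ∀ x : N → ℝ, (∀ l, 0 ≤ x l) → ∀ i : N,
      f x i = if ∃ j, 0 < x j
        then x i ^ ((a : ℝ) / ((a : ℝ) - 1)) / ∑ j, x j ^ ((a : ℝ) / ((a : ℝ) - 1))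
        else 1 / (n : ℝ))
    (A : Finset N) (hA : A.card = a - 1)
    (xs : N → ℝ)
    (hxs : xs = fun i => if i ∈ A then v * a * ((a : ℝ) - 2) / ((a : ℝ) - 1) ^ 3 else 0) :
    IsNash f (fun _ => v) xs ∧
      ∑ i, xs i = v * a * ((a : ℝ) - 2) / ((a : ℝ) - 1) ^ 2 ∧
      v * a * ((a : ℝ) - 2) / ((a : ℝ) - 1) ^ 2 < v ∧
      ¬ ((∃ y : N → ℝ, IsNash f (fun _ => v) y ∧ ∑ i, y i = v) ∧
          (∀ y : N → ℝ, IsNash f (fun _ => v) y → ∑ i, y i = v)) := by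
  have ha : (3 : ℝ) ≤ a := by exact_mod_cast ha3
  change xs = fun i => if i ∈ A then equilibriumEffort v a else 0 at hxs
  subst hxs
  have hNash := isNash_ite_equilibriumEffort (f := f) hv ha3
    (fun x hx hpos i => by rw [hfdef x hx i, if_pos hpos]) hA
  have hsum : ∑ i, (if i ∈ A then equilibriumEffort v a else 0) =
      v * a * ((a : ℝ) - 2) / ((a : ℝ) - 1) ^ 2 := by
    rw [sum_ite_mem, univ_inter, sum_const, nsmul_eq_mul, hA, Nat.cast_pred (by omega),
      equilibriumEffort]
    field_simp
  have hlt : v * a * ((a : ℝ) - 2) / ((a : ℝ) - 1) ^ 2 < v := by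
    rw [div_lt_iff₀ (by nlinarith)]
    nlinarith
  refine ⟨hNash, hsum, hlt, fun ⟨_, hall⟩ => ?_⟩
  linarith [hall _ hNash]

theorem stmt_15 {N : Type*} [Fintype N] [DecidableEq N]
    (n : ℕ) (hn : Fintype.card N = n)
    (v : ℝ) (hv : 0 < v)
    (a : ℕ) (ha3 : 3 ≤ a) (han : a ≤ n)
    (f : (N → ℝ) → N → ℝ)
    (hfdef : ∀ x : N → ℝ, (∀ l, 0 ≤ x l) → ∀ i : N,
      f x i = if ∃ j, 0 < x j
        then x i ^ ((a : ℝ) / ((a : ℝ) - 1)) / ∑ j, x j ^ ((a : ℝ) / ((a : ℝ) - 1))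
        else 1 / (n : ℝ))
    (A : Finset N) (hA : A.card = a - 1)
    (xs : N → ℝ)
    (hxs : xs = fun i => if i ∈ A then v * a * ((a : ℝ) - 2) / ((a : ℝ) - 1) ^ 3 else 0) :
    IsNash f (fun _ => v) xs ∧
      ∑ i, xs i = v * a * ((a : ℝ) - 2) / ((a : ℝ) - 1) ^ 2 ∧
      v * a * ((a : ℝ) - 2) / ((a : ℝ) - 1) ^ 2 < v ∧
      ¬ ((∃ y : N → ℝ, IsNash f (fun _ => v) y ∧ ∑ i, y i = v) ∧
          (∀ y : N → ℝ, IsNash f (fun _ => v) y → ∑ i, y i = v)) :=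
  stmt_15_general n v hv a ha3 f hfdef A hA xs hxs
end

section
/- Under the Tullock CSF with squared efforts and common value v, if x* is a Nash equilibrium with set of active contestants A (those with positive effort), |A| = α ≥ 2, and all active efforts are equal, then each active effort equals 2v(α−1)/α² and the equilibrium payoff condition forces α = 2. -/
open Finset

/-!
Fix an active contestant `i` with effort `t` and let `c = ∑_{j ≠ i} x_j²`. Deviating to `y`
yields `v y² / (y² + c) - y`, so `t` maximizes this function on `[0, ∞)`. Since `t > 0`,
Fermat's theorem gives the first-order condition `2 v t c = (t² + c)²`, and comparing with the
deviation to `y = 0` gives `t² + c ≤ v t`; together they force `c ≤ t²`. With equal active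
efforts `c = (α - 1) t²`, so the first condition yields `t = 2 v (α - 1) / α²` and the second
`α ≤ 2`.
-/

section DeviationPayoff

variable {v c t : ℝ}

theorem firstOrderCondition_of_isMaxOn (hc : 0 < c) (ht : 0 < t)
    (hmax : IsMaxOn (fun y => v * y ^ 2 / (y ^ 2 + c) - y) (Set.Ici 0) t) :
    2 * v * t * c = (t ^ 2 + c) ^ 2 := by
  have hden : t ^ 2 + c ≠ 0 := by positivity
  have hderiv : HasDerivAt (fun y => v * y ^ 2 / (y ^ 2 + c) - y)
      ((v * (2 * t) * (t ^ 2 + c) - v * t ^ 2 * (2 * t)) / (t ^ 2 + c) ^ 2 - 1) t := by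
    have hsq : HasDerivAt (fun y : ℝ => y ^ 2) (2 * t) t := by
      simpa using hasDerivAt_pow 2 t
    exact ((hsq.const_mul v).div (hsq.add_const c) hden).sub (hasDerivAt_id t)
  have hlocal : IsLocalMax (fun y => v * y ^ 2 / (y ^ 2 + c) - y) t :=
    hmax.isLocalMax (Ici_mem_nhds ht)
  have hzero := hlocal.hasDerivAt_eq_zero hderiv
  field_simp at hzero
  linarith

theorem le_sq_of_isMaxOn (hc : 0 < c) (ht : 0 < t)
    (hmax : IsMaxOn (fun y => v * y ^ 2 / (y ^ 2 + c) - y) (Set.Ici 0) t) :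
    c ≤ t ^ 2 := by
  have hfoc := firstOrderCondition_of_isMaxOn hc ht hmax
  have hden : 0 < t ^ 2 + c := by positivity
  have hparticipation : t ^ 2 + c ≤ v * t := by
    have h0 : v * 0 ^ 2 / (0 ^ 2 + c) - 0 ≤ v * t ^ 2 / (t ^ 2 + c) - t :=
      hmax (Set.mem_Ici.mpr le_rfl)
    rw [zero_pow two_ne_zero, mul_zero, zero_div, sub_zero, sub_nonneg, le_div_iff₀ hden] at h0
    nlinarith
  have hvt : 0 < v * t := hden.trans_le hparticipation
  nlinarith

end DeviationPayoff

section SquaredTullock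

variable {N : Type*} [Fintype N]

def IsSquaredTullock (n : ℕ) (f : (N → ℝ) → N → ℝ) : Prop :=
  ∀ x : N → ℝ, (∀ l, 0 ≤ x l) → ∀ i : N,
    f x i = if ∃ j, 0 < x j then x i ^ 2 / ∑ j, x j ^ 2 else 1 / (n : ℝ)

theorem sum_sq_eq_card_mul {A : Finset N} {x : N → ℝ} {t : ℝ} (hA : ∀ i, i ∉ A → x i = 0)
    (hconst : ∀ i ∈ A, x i = t) : ∑ j, x j ^ 2 = #A * t ^ 2 := by
  rw [← sum_subset A.subset_univ fun j _ hj => by rw [hA j hj]; ring,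
    sum_congr rfl fun j hj => by rw [hconst j hj], sum_const, nsmul_eq_mul]

variable [DecidableEq N]

theorem sum_sq_update (x : N → ℝ) (i : N) (y : ℝ) :
    ∑ j, Function.update x i y j ^ 2 = y ^ 2 + ∑ j ∈ univ.erase i, x j ^ 2 := by
  rw [← add_sum_erase _ _ (mem_univ i), Function.update_self]
  congr 1
  exact sum_congr rfl fun j hj => by rw [Function.update_of_ne (ne_of_mem_erase hj)]

theorem payoff_update_of_isSquaredTullock {n : ℕ} {f : (N → ℝ) → N → ℝ}
    (hf : IsSquaredTullock n f) (v : ℝ) {x : N → ℝ} (hx : ∀ l, 0 ≤ x l) {i j : N}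
    (hji : j ≠ i) (hj : 0 < x j) {y : ℝ} (hy : 0 ≤ y) :
    payoff f (fun _ => v) (Function.update x i y) i
      = v * y ^ 2 / (y ^ 2 + ∑ k ∈ univ.erase i, x k ^ 2) - y := by
  have hxy : ∀ l, 0 ≤ Function.update x i y l := by
    intro l
    rcases eq_or_ne l i with rfl | hl
    · simpa using hy
    · simpa [Function.update_of_ne hl] using hx l
  have hactive : ∃ k, 0 < Function.update x i y k := ⟨j, by rwa [Function.update_of_ne hji]⟩
  rw [payoff, hf _ hxy, if_pos hactive, sum_sq_update, Function.update_self]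
  ring

theorem isMaxOn_of_isNash {n : ℕ} {f : (N → ℝ) → N → ℝ} (hf : IsSquaredTullock n f)
    {v : ℝ} {x : N → ℝ} (hx : IsNash f (fun _ => v) x) {i j : N} (hji : j ≠ i)
    (hj : 0 < x j) :
    IsMaxOn (fun y => v * y ^ 2 / (y ^ 2 + ∑ k ∈ univ.erase i, x k ^ 2) - y)
      (Set.Ici 0) (x i) := by
  intro y hy
  have hstay := payoff_update_of_isSquaredTullock hf v hx.1 hji hj (hx.1 i)
  rw [Function.update_eq_self] at hstay
  have hdev := hx.2 i y hy
  rwa [payoff_update_of_isSquaredTullock hf v hx.1 hji hj hy, hstay] at hdev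

end SquaredTullock

theorem stmt_17_general {N : Type*} [Fintype N] [DecidableEq N]
    (n : ℕ)
    (v : ℝ)
    (f : (N → ℝ) → N → ℝ)
    (hfdef : ∀ x : N → ℝ, (∀ l, 0 ≤ x l) → ∀ i : N,
      f x i = if ∃ j, 0 < x j then x i ^ 2 / ∑ j, x j ^ 2 else 1 / (n : ℝ))
    (x : N → ℝ) (hx : IsNash f (fun _ => v) x)
    (A : Finset N) (hA : ∀ i, i ∈ A ↔ 0 < x i)
    (α : ℕ) (hα : A.card = α) (hα2 : 2 ≤ α)
    (heq : ∀ i ∈ A, ∀ j ∈ A, x i = x j) :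
    (∀ i ∈ A, x i = 2 * v * ((α : ℝ) - 1) / (α : ℝ) ^ 2) ∧ α = 2 := by
  obtain ⟨i, hi, j, hj, hij⟩ := one_lt_card.mp (by omega : 1 < #A)
  have ht : 0 < x i := (hA i).mp hi
  have hinactive : ∀ k, k ∉ A → x k = 0 := fun k hk =>
    le_antisymm (not_lt.mp (mt (hA k).mpr hk)) (hx.1 k)
  have hothers : ∑ k ∈ univ.erase i, x k ^ 2 = ((α : ℝ) - 1) * x i ^ 2 := by
    have htotal := sum_sq_eq_card_mul hinactive fun k hk => heq k hk i hi
    rw [← add_sum_erase _ _ (mem_univ i), hα] at htotal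
    linarith
  have hα1 : (1 : ℝ) < α := by exact_mod_cast hα2
  have hc : 0 < ((α : ℝ) - 1) * x i ^ 2 := mul_pos (sub_pos.mpr hα1) (pow_pos ht 2)
  have hmax := isMaxOn_of_isNash hfdef hx hij.symm ((hA j).mp hj)
  rw [hothers] at hmax
  have hfoc := firstOrderCondition_of_isMaxOn hc ht hmax
  have hle := le_sq_of_isMaxOn hc ht hmax
  refine ⟨fun k hk => ?_, ?_⟩
  · rw [heq k hk i hi, eq_div_iff (by positivity)]
    apply mul_right_cancel₀ (pow_ne_zero 3 ht.ne')
    linear_combination -hfoc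
  · have : (α : ℝ) ≤ 2 := by nlinarith
    exact_mod_cast (by exact_mod_cast this : α ≤ 2).antisymm hα2

theorem stmt_17 {N : Type*} [Fintype N] [DecidableEq N]
    (n : ℕ) (hn : Fintype.card N = n) (hn2 : 2 ≤ n)
    (v : ℝ) (hv : 0 < v)
    (f : (N → ℝ) → N → ℝ)
    (hfdef : ∀ x : N → ℝ, (∀ l, 0 ≤ x l) → ∀ i : N,
      f x i = if ∃ j, 0 < x j then x i ^ 2 / ∑ j, x j ^ 2 else 1 / (n : ℝ))
    (x : N → ℝ) (hx : IsNash f (fun _ => v) x)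
    (A : Finset N) (hA : ∀ i, i ∈ A ↔ 0 < x i)
    (α : ℕ) (hα : A.card = α) (hα2 : 2 ≤ α)
    (heq : ∀ i ∈ A, ∀ j ∈ A, x i = x j) :
    (∀ i ∈ A, x i = 2 * v * ((α : ℝ) - 1) / (α : ℝ) ^ 2) ∧ α = 2 :=
  stmt_17_general n v f hfdef x hx A hA α hα hα2 heq
end

section
/- Under the Tullock CSF with squared efforts, in any Nash equilibrium all active contestants exert equal efforts: if x*_i and x*_k are both positive and satisfy the first-order condition 2v·x·(S − x²) = S² where S = ∑_{l active}(x*_l)², then x*_i = x*_k or ∑_{l ≠ i,k, active}(x*_l)² = x*_i·x*_k, and the latter case leads to a contradiction via a profitable deviation to zero effort. -/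
open Finset

/-!
Subtracting the two first-order conditions gives `(a - b) (S - (a² + ab + b²)) = 0`, so two
active contestants with efforts `a ≠ b` force `S = a² + ab + b²`, and then either condition reads
`S² = 2vab(a + b)`. On the other hand, quitting is a feasible deviation that still leaves an
active rival, hence wins nothing and costs nothing; so an equilibrium payoff is nonnegative,
which means `S ≤ a v` and `S ≤ b v`. Then `S ≥ 2b(a + b)` and `S ≥ 2a(a + b)`, whose sum
contradicts `S = a² + ab + b²`.
-/

theorem IsNash.le_mul_of_update_zero {N : Type*} [DecidableEq N] {f : (N → ℝ) → N → ℝ}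
    {v x : N → ℝ} (hx : IsNash f v x) {i : N} (hf : f (Function.update x i 0) i = 0) :
    x i ≤ f x i * v i := by
  have hdev := hx.2 i 0 le_rfl
  simp only [payoff, hf, Function.update_self] at hdev
  linarith

section SquaredTullock

variable {N : Type*} [Fintype N] [DecidableEq N] {f : (N → ℝ) → N → ℝ} {c : ℝ}

theorem squaredTullock_update_zero
    (hf : ∀ y : N → ℝ, (∀ l, 0 ≤ y l) → ∀ i,
      f y i = if ∃ j, 0 < y j then y i ^ 2 / ∑ j, y j ^ 2 else c)
    {x : N → ℝ} (hx : ∀ l, 0 ≤ x l) {m j : N} (hjm : j ≠ m) (hj : 0 < x j) :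
    f (Function.update x m 0) m = 0 := by
  have hnn : ∀ l, 0 ≤ Function.update x m 0 l := by
    intro l
    rcases eq_or_ne l m with rfl | hl
    · simp
    · simpa [Function.update_of_ne hl] using hx l
  have hactive : ∃ l, 0 < Function.update x m 0 l := ⟨j, by rwa [Function.update_of_ne hjm]⟩
  simp [hf _ hnn, hactive]

theorem IsNash.sum_sq_le_mul
    (hf : ∀ y : N → ℝ, (∀ l, 0 ≤ y l) → ∀ i,
      f y i = if ∃ j, 0 < y j then y i ^ 2 / ∑ j, y j ^ 2 else c)
    {v : ℝ} {x : N → ℝ} (hx : IsNash f (fun _ => v) x) {m j : N} (hjm : j ≠ m)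
    (hm : 0 < x m) (hj : 0 < x j) :
    ∑ l, x l ^ 2 ≤ x m * v := by
  have hT : 0 < ∑ l, x l ^ 2 :=
    lt_of_lt_of_le (by positivity) (single_le_sum (fun l _ => sq_nonneg (x l)) (mem_univ m))
  have hpay := hx.le_mul_of_update_zero (squaredTullock_update_zero hf hx.1 hjm hj)
  rw [hf x hx.1, if_pos ⟨m, hm⟩, div_mul_eq_mul_div, le_div_iff₀ hT] at hpay
  exact le_of_mul_le_mul_left (hpay.trans_eq (by ring)) hm

end SquaredTullock

theorem eq_of_foc_of_le_mul {a b v S : ℝ} (ha : 0 < a) (hb : 0 < b) (hv : 0 < v)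
    (hFOCa : 2 * v * a * (S - a ^ 2) = S ^ 2) (hFOCb : 2 * v * b * (S - b ^ 2) = S ^ 2)
    (hSa : S ≤ a * v) (hSb : S ≤ b * v) : a = b := by
  by_contra hne
  have hS : S = a ^ 2 + a * b + b ^ 2 := by
    have h : (2 * v * (a - b)) * (S - (a ^ 2 + a * b + b ^ 2)) = 0 := by
      linear_combination hFOCa - hFOCb
    have hne' : 2 * v * (a - b) ≠ 0 := mul_ne_zero (by positivity) (sub_ne_zero.mpr hne)
    linarith [(mul_eq_zero.mp h).resolve_left hne']
  have hSpos : 0 < S := by rw [hS]; positivity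
  have hSsq : S ^ 2 = 2 * (a * v) * b * (a + b) := by
    rw [← hFOCa, hS]; ring
  have hbS : 2 * b * (a + b) ≤ S := by nlinarith [mul_pos hb (add_pos ha hb)]
  have haS : 2 * a * (a + b) ≤ S := by nlinarith [mul_pos ha (add_pos ha hb)]
  nlinarith [mul_pos ha hb]

theorem stmt_18_general {N : Type*} [Fintype N] [DecidableEq N]
    (n : ℕ)
    (v : ℝ) (hv : 0 < v)
    (f : (N → ℝ) → N → ℝ)
    (hfdef : ∀ x : N → ℝ, (∀ l, 0 ≤ x l) → ∀ i : N,
      f x i = if ∃ j, 0 < x j then x i ^ 2 / ∑ j, x j ^ 2 else 1 / (n : ℝ))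
    (x : N → ℝ) (hx : IsNash f (fun _ => v) x)
    (A : Finset N) (hA : ∀ i, i ∈ A ↔ 0 < x i)
    (S : ℝ) (hS : S = ∑ l ∈ A, x l ^ 2)
    (i k : N) (hi : 0 < x i) (hk : 0 < x k)
    (hFOCi : 2 * v * x i * (S - x i ^ 2) = S ^ 2)
    (hFOCk : 2 * v * x k * (S - x k ^ 2) = S ^ 2) :
    (x i = x k ∨ ∑ l ∈ A \ {i, k}, x l ^ 2 = x i * x k) ∧ x i = x k := by
  have hT : ∑ l, x l ^ 2 = S := by
    rw [hS]
    refine (sum_subset (subset_univ A) fun l _ hl => ?_).symm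
    rw [le_antisymm (not_lt.mp (mt (hA l).mpr hl)) (hx.1 l), zero_pow two_ne_zero]
  have heq : x i = x k := by
    by_contra hne
    have hik : i ≠ k := fun h => hne (congrArg x h)
    refine hne (eq_of_foc_of_le_mul hi hk hv hFOCi hFOCk ?_ ?_)
    · exact hT ▸ hx.sum_sq_le_mul hfdef hik.symm hi hk
    · exact hT ▸ hx.sum_sq_le_mul hfdef hik hk hi
  exact ⟨Or.inl heq, heq⟩

theorem stmt_18 {N : Type*} [Fintype N] [DecidableEq N]
    (n : ℕ) (hn : Fintype.card N = n) (hn2 : 2 ≤ n)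
    (v : ℝ) (hv : 0 < v)
    (f : (N → ℝ) → N → ℝ)
    (hfdef : ∀ x : N → ℝ, (∀ l, 0 ≤ x l) → ∀ i : N,
      f x i = if ∃ j, 0 < x j then x i ^ 2 / ∑ j, x j ^ 2 else 1 / (n : ℝ))
    (x : N → ℝ) (hx : IsNash f (fun _ => v) x)
    (A : Finset N) (hA : ∀ i, i ∈ A ↔ 0 < x i)
    (S : ℝ) (hS : S = ∑ l ∈ A, x l ^ 2)
    (i k : N) (hi : 0 < x i) (hk : 0 < x k)
    (hFOCi : 2 * v * x i * (S - x i ^ 2) = S ^ 2)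
    (hFOCk : 2 * v * x k * (S - x k ^ 2) = S ^ 2) :
    (x i = x k ∨ ∑ l ∈ A \ {i, k}, x l ^ 2 = x i * x k) ∧ x i = x k :=
  stmt_18_general n v hv f hfdef x hx A hA S hS i k hi hk hFOCi hFOCk
end
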